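/- arXiv:1509.04981 — 7 statements merged into one kernel-verified Lean document; each statement's English description precedes it below -/
import Mathlib

section
/- Let x(t) = (0, 0, F(t)), y(t) = (R(t)·cos Θ(t), R(t)·sin Θ(t), −F(t)) and z(t) = (−R(t)·cos Θ(t), −R(t)·sin Θ(t), −F(t)) be curves in ℝ³. Then these three curves solve the Newtonian three-body problem with gravitational constant 1 and masses 200 (for the body x on the z-axis) and 100 each (for the bodies y and z): for all t ∈ ℝ, x''(t) = 100·(y(t)−x(t))/‖y(t)−x(t)‖³ + 100·(z(t)−x(t))/‖z(t)−x(t)‖³, y''(t) = 200·(x(t)−y(t))/‖x(t)−y(t)‖³ + 100·(z(t)−y(t))/‖z(t)−y(t)‖³, and z''(t) = 200·(x(t)−z(t))/‖x(t)−z(t)‖³ + 100·(y(t)−z(t))/‖y(t)−z(t)‖³. -/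
/-!
The bodies `y` and `z` are antipodal on the horizontal circle of radius `R` at height `-F`, and `x`
sits on its axis at height `F`. Hence `‖y - x‖ = ‖z - x‖ = √(R² + 4F²)` and `‖z - y‖ = 2R`, and the
Newtonian accelerations reduce to scalar equations for `F` and `R`. On the kinematic side,
`Θ' = L / R²` (with `L = 10a`) is conservation of angular momentum: it cancels the Coriolis term
`2R'Θ' + RΘ''` of the acceleration in polar coordinates, leaving `(R'' - L² / R³) (cos Θ, sin Θ)`.
The equation for `z` is the one for `y` with `Θ` replaced by `Θ + π`.
-/

open Real

theorem deriv_deriv_eq_of_hasDerivAt {𝕜 F : Type*} [NontriviallyNormedField 𝕜]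
    [NormedAddCommGroup F] [NormedSpace 𝕜 F] {c c' c'' : 𝕜 → F}
    (hc : ∀ s, HasDerivAt c (c' s) s) (hc' : ∀ s, HasDerivAt c' (c'' s) s) (t : 𝕜) :
    deriv (deriv c) t = c'' t := by
  rw [show deriv c = c' from funext fun s => (hc s).deriv]
  exact (hc' t).deriv

theorem PiLp.hasDerivAt_of_hasDerivAt_ofLp {𝕜 ι : Type*} {E : ι → Type*}
    [NontriviallyNormedField 𝕜] [∀ i, NormedAddCommGroup (E i)] [∀ i, NormedSpace 𝕜 (E i)]
    [Fintype ι] (p : ENNReal) [Fact (1 ≤ p)] {c : 𝕜 → PiLp p E} {c' : PiLp p E} {t : 𝕜}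
    (h : HasDerivAt (fun s => (c s).ofLp : 𝕜 → ∀ i, E i) c'.ofLp t) : HasDerivAt c c' t := by
  have h' := (PiLp.hasFDerivAt_toLp (𝕜 := 𝕜) p (c t).ofLp).comp_hasDerivAt t h
  exact h'

theorem PiLp.deriv_deriv_eq_toLp {𝕜 ι : Type*} {E : ι → Type*}
    [NontriviallyNormedField 𝕜] [∀ i, NormedAddCommGroup (E i)] [∀ i, NormedSpace 𝕜 (E i)]
    [Fintype ι] (p : ENNReal) [Fact (1 ≤ p)] {c : 𝕜 → PiLp p E} {v v' v'' : 𝕜 → ∀ i, E i}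
    (hc : ∀ s, (c s).ofLp = v s) (hv : ∀ s, HasDerivAt v (v' s) s)
    (hv' : ∀ s, HasDerivAt v' (v'' s) s) (t : 𝕜) :
    deriv (deriv c) t = WithLp.toLp p (v'' t) := by
  obtain rfl : c = fun s => WithLp.toLp p (v s) := funext fun s => by rw [← hc]
  exact deriv_deriv_eq_of_hasDerivAt (fun s => PiLp.hasDerivAt_of_hasDerivAt_ofLp p (hv s))
    (fun s => PiLp.hasDerivAt_of_hasDerivAt_ofLp p (c' := WithLp.toLp p (v'' s)) (hv' s)) t

theorem HasDerivAt.vec3 {𝕜 : Type*} [NontriviallyNormedField 𝕜] {f g h : 𝕜 → 𝕜}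
    {f' g' h' t : 𝕜} (hf : HasDerivAt f f' t) (hg : HasDerivAt g g' t) (hh : HasDerivAt h h' t) :
    HasDerivAt (fun s => ![f s, g s, h s]) ![f', g', h'] t :=
  hf.finCons <| hg.finCons <| hh.finCons <|
    (hasDerivAt_const t ![]).congr_deriv (Subsingleton.elim _ _)

section Polar

variable {R R' Θ : ℝ → ℝ} {L r' r'' t : ℝ}

theorem hasDerivAt_polar_cos (hR : HasDerivAt R r' t) (hΘ : HasDerivAt Θ (L / R t ^ 2) t)
    (hR0 : R t ≠ 0) :
    HasDerivAt (fun s => R s * cos (Θ s)) (r' * cos (Θ t) - L / R t * sin (Θ t)) t :=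
  (hR.mul hΘ.cos).congr_deriv (by field_simp; ring)

theorem hasDerivAt_polar_sin (hR : HasDerivAt R r' t) (hΘ : HasDerivAt Θ (L / R t ^ 2) t)
    (hR0 : R t ≠ 0) :
    HasDerivAt (fun s => R s * sin (Θ s)) (r' * sin (Θ t) + L / R t * cos (Θ t)) t :=
  (hR.mul hΘ.sin).congr_deriv (by field_simp)

theorem hasDerivAt_polar_velocity_cos (hR : HasDerivAt R (R' t) t) (hR' : HasDerivAt R' r'' t)
    (hΘ : HasDerivAt Θ (L / R t ^ 2) t) (hR0 : R t ≠ 0) :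
    HasDerivAt (fun s => R' s * cos (Θ s) - L / R s * sin (Θ s))
      ((r'' - L ^ 2 / R t ^ 3) * cos (Θ t)) t :=
  ((hR'.mul hΘ.cos).sub (((hasDerivAt_const t L).fun_div hR hR0).mul hΘ.sin)).congr_deriv
    (by field_simp; ring)

theorem hasDerivAt_polar_velocity_sin (hR : HasDerivAt R (R' t) t) (hR' : HasDerivAt R' r'' t)
    (hΘ : HasDerivAt Θ (L / R t ^ 2) t) (hR0 : R t ≠ 0) :
    HasDerivAt (fun s => R' s * sin (Θ s) + L / R s * cos (Θ s))
      ((r'' - L ^ 2 / R t ^ 3) * sin (Θ t)) t :=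
  ((hR'.mul hΘ.sin).add (((hasDerivAt_const t L).fun_div hR hR0).mul hΘ.cos)).congr_deriv
    (by field_simp; ring)

end Polar

theorem EuclideanSpace.norm_toLp_vec3 (u v w : ℝ) :
    ‖(WithLp.toLp 2 ![u, v, w] : EuclideanSpace ℝ (Fin 3))‖ = √(u ^ 2 + v ^ 2 + w ^ 2) := by
  simp [EuclideanSpace.norm_eq, Fin.sum_univ_three]

section Configuration

variable {X Y Z : EuclideanSpace ℝ (Fin 3)} {F R θ : ℝ}

theorem norm_circle_sub_axis (hX : X.ofLp = ![0, 0, F])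
    (hY : Y.ofLp = ![R * cos θ, R * sin θ, -F]) :
    ‖Y - X‖ = √(R ^ 2 + 4 * F ^ 2) := by
  have : Y - X = WithLp.toLp 2 ![R * cos θ, R * sin θ, -2 * F] := by
    ext i; fin_cases i <;> simp [hX, hY]; ring
  rw [this, EuclideanSpace.norm_toLp_vec3]
  congr 1
  linear_combination R ^ 2 * sin_sq_add_cos_sq θ

theorem norm_antipode_sub (hR : 0 ≤ R) (hY : Y.ofLp = ![R * cos θ, R * sin θ, -F])
    (hZ : Z.ofLp = ![-(R * cos θ), -(R * sin θ), -F]) : ‖Z - Y‖ = 2 * R := by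
  have : Z - Y = WithLp.toLp 2 ![-2 * R * cos θ, -2 * R * sin θ, 0] := by
    ext i; fin_cases i <;> simp [hY, hZ] <;> ring
  rw [this, EuclideanSpace.norm_toLp_vec3, ← sqrt_sq (by positivity : 0 ≤ 2 * R)]
  congr 1
  linear_combination 4 * R ^ 2 * sin_sq_add_cos_sq θ

theorem axis_force_eq (m : ℝ) (hX : X.ofLp = ![0, 0, F])
    (hY : Y.ofLp = ![R * cos θ, R * sin θ, -F]) (hZ : Z.ofLp = ![-(R * cos θ), -(R * sin θ), -F]) :
    (m / ‖Y - X‖ ^ 3) • (Y - X) + (m / ‖Z - X‖ ^ 3) • (Z - X) =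
      WithLp.toLp 2 ![0, 0, -4 * m * F / √(R ^ 2 + 4 * F ^ 2) ^ 3] := by
  have hZ' : Z.ofLp = ![(-R) * cos θ, (-R) * sin θ, -F] := by simp [hZ]
  rw [norm_circle_sub_axis hX hY, norm_circle_sub_axis hX hZ', neg_sq]
  ext i; fin_cases i <;> simp [hX, hY, hZ]; ring

theorem circle_force_eq (M m : ℝ) (hR : 0 < R) (hX : X.ofLp = ![0, 0, F])
    (hY : Y.ofLp = ![R * cos θ, R * sin θ, -F]) (hZ : Z.ofLp = ![-(R * cos θ), -(R * sin θ), -F]) :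
    (M / ‖X - Y‖ ^ 3) • (X - Y) + (m / ‖Z - Y‖ ^ 3) • (Z - Y) =
      WithLp.toLp 2 ![(-(m / (4 * R ^ 2)) - M * R / √(R ^ 2 + 4 * F ^ 2) ^ 3) * cos θ,
        (-(m / (4 * R ^ 2)) - M * R / √(R ^ 2 + 4 * F ^ 2) ^ 3) * sin θ,
        2 * M * F / √(R ^ 2 + 4 * F ^ 2) ^ 3] := by
  rw [norm_sub_rev, norm_circle_sub_axis hX hY, norm_antipode_sub hR.le hY hZ]
  ext i; fin_cases i <;> simp [hX, hY, hZ] <;> field_simp <;> ring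

end Configuration

section Motion

variable {M m L : ℝ} {F F' R R' Θ : ℝ → ℝ} {x y z : ℝ → EuclideanSpace ℝ (Fin 3)}

theorem deriv_deriv_axis_eq_force (hF : ∀ t, HasDerivAt F (F' t) t)
    (hF' : ∀ t, HasDerivAt F' (-4 * m * F t / √(R t ^ 2 + 4 * F t ^ 2) ^ 3) t)
    (hx : ∀ t, (x t).ofLp = ![0, 0, F t])
    (hy : ∀ t, (y t).ofLp = ![R t * cos (Θ t), R t * sin (Θ t), -F t])
    (hz : ∀ t, (z t).ofLp = ![-(R t * cos (Θ t)), -(R t * sin (Θ t)), -F t]) (t : ℝ) :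
    deriv (deriv x) t =
      (m / ‖y t - x t‖ ^ 3) • (y t - x t) + (m / ‖z t - x t‖ ^ 3) • (z t - x t) := by
  rw [axis_force_eq m (hx t) (hy t) (hz t)]
  exact PiLp.deriv_deriv_eq_toLp 2 hx
    (fun s => (hasDerivAt_const s 0).vec3 (hasDerivAt_const s 0) (hF s))
    (fun s => (hasDerivAt_const s 0).vec3 (hasDerivAt_const s 0) (hF' s)) t

theorem deriv_deriv_circle_eq_force (hF : ∀ t, HasDerivAt F (F' t) t)
    (hF' : ∀ t, HasDerivAt F' (-2 * M * F t / √(R t ^ 2 + 4 * F t ^ 2) ^ 3) t)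
    (hR : ∀ t, HasDerivAt R (R' t) t)
    (hR' : ∀ t, HasDerivAt R'
      (L ^ 2 / R t ^ 3 - m / (4 * R t ^ 2) - M * R t / √(R t ^ 2 + 4 * F t ^ 2) ^ 3) t)
    (hRpos : ∀ t, 0 < R t) (hΘ : ∀ t, HasDerivAt Θ (L / R t ^ 2) t)
    (hx : ∀ t, (x t).ofLp = ![0, 0, F t])
    (hy : ∀ t, (y t).ofLp = ![R t * cos (Θ t), R t * sin (Θ t), -F t])
    (hz : ∀ t, (z t).ofLp = ![-(R t * cos (Θ t)), -(R t * sin (Θ t)), -F t]) (t : ℝ) :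
    deriv (deriv y) t =
      (M / ‖x t - y t‖ ^ 3) • (x t - y t) + (m / ‖z t - y t‖ ^ 3) • (z t - y t) := by
  have hR0 s := (hRpos s).ne'
  rw [circle_force_eq M m (hRpos t) (hx t) (hy t) (hz t), PiLp.deriv_deriv_eq_toLp 2 hy
    (fun s => (hasDerivAt_polar_cos (hR s) (hΘ s) (hR0 s)).vec3
      (hasDerivAt_polar_sin (hR s) (hΘ s) (hR0 s)) (hF s).neg)
    (fun s => (hasDerivAt_polar_velocity_cos (hR s) (hR' s) (hΘ s) (hR0 s)).vec3
      (hasDerivAt_polar_velocity_sin (hR s) (hR' s) (hΘ s) (hR0 s)) (hF' s).neg) t]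
  congr 3
  · ring
  · ring
  · congr 1; ring

end Motion

theorem three_body_solution_general
    (a : ℝ) (F R Θ : ℝ → ℝ)
    (hF : ContDiff ℝ 2 F) (hR : ContDiff ℝ 2 R)
    (hRpos : ∀ t, 0 < R t)
    (hΘ : Differentiable ℝ Θ)
    (hFode : ∀ t, deriv (deriv F) t =
      -400 * F t / Real.sqrt (R t ^ 2 + 4 * F t ^ 2) ^ 3)
    (hRode : ∀ t, deriv (deriv R) t =
      100 * a ^ 2 / R t ^ 3 - 25 / R t ^ 2
        - 200 * R t / Real.sqrt (R t ^ 2 + 4 * F t ^ 2) ^ 3)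
    (hΘode : ∀ t, deriv Θ t = 10 * a / R t ^ 2)
    (x y z : ℝ → EuclideanSpace ℝ (Fin 3))
    (hx : ∀ t, x t = ![0, 0, F t])
    (hy : ∀ t, y t = ![R t * Real.cos (Θ t), R t * Real.sin (Θ t), -F t])
    (hz : ∀ t, z t = ![-(R t * Real.cos (Θ t)), -(R t * Real.sin (Θ t)), -F t]) :
    ∀ t : ℝ,
      deriv (deriv x) t =
          (100 / ‖y t - x t‖ ^ 3) • (y t - x t)
            + (100 / ‖z t - x t‖ ^ 3) • (z t - x t) ∧
      deriv (deriv y) t =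
          (200 / ‖x t - y t‖ ^ 3) • (x t - y t)
            + (100 / ‖z t - y t‖ ^ 3) • (z t - y t) ∧
      deriv (deriv z) t =
          (200 / ‖x t - z t‖ ^ 3) • (x t - z t)
            + (100 / ‖y t - z t‖ ^ 3) • (y t - z t) := by
  have hF' t : HasDerivAt F (deriv F t) t := (hF.differentiable (by norm_num) t).hasDerivAt
  have hR' t : HasDerivAt R (deriv R t) t := (hR.differentiable (by norm_num) t).hasDerivAt
  have hF'' t : HasDerivAt (deriv F) (deriv (deriv F) t) t :=
    (hF.differentiable_deriv_two t).hasDerivAt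
  have hR'' t : HasDerivAt (deriv R) (deriv (deriv R) t) t :=
    (hR.differentiable_deriv_two t).hasDerivAt
  have hF''_axis t : HasDerivAt (deriv F) (-4 * 100 * F t / √(R t ^ 2 + 4 * F t ^ 2) ^ 3) t :=
    (hF'' t).congr_deriv (by rw [hFode]; ring)
  have hF''_circle t : HasDerivAt (deriv F) (-2 * 200 * F t / √(R t ^ 2 + 4 * F t ^ 2) ^ 3) t :=
    (hF'' t).congr_deriv (by rw [hFode]; ring)
  have hR''_circle t : HasDerivAt (deriv R) ((10 * a) ^ 2 / R t ^ 3 - 100 / (4 * R t ^ 2)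
      - 200 * R t / √(R t ^ 2 + 4 * F t ^ 2) ^ 3) t :=
    (hR'' t).congr_deriv (by rw [hRode]; ring)
  have hΘ' t : HasDerivAt Θ (10 * a / R t ^ 2) t := hΘode t ▸ (hΘ t).hasDerivAt
  have hyπ t : (y t).ofLp = ![-(R t * cos (Θ t + π)), -(R t * sin (Θ t + π)), -F t] := by
    simp [hy]
  have hzπ t : (z t).ofLp = ![R t * cos (Θ t + π), R t * sin (Θ t + π), -F t] := by
    simp [hz]
  intro t
  exact ⟨deriv_deriv_axis_eq_force hF' hF''_axis hx hy hz t,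
    deriv_deriv_circle_eq_force hF' hF''_circle hR' hR''_circle hRpos hΘ' hx hy hz t,
    deriv_deriv_circle_eq_force hF' hF''_circle hR' hR''_circle hRpos
      (fun t => (hΘ' t).add_const π) hx hzπ hyπ t⟩

/-- the curves `x`, `y`, `z` built from solutions `F`, `R`, `Θ` of the
reduced ODE system solve the Newtonian three-body problem with gravitational
constant `1` and masses `200`, `100`, `100`. -/
theorem three_body_solution
    (a b : ℝ) (F R Θ : ℝ → ℝ)
    (hF : ContDiff ℝ 2 F) (hR : ContDiff ℝ 2 R)
    (hRpos : ∀ t, 0 < R t)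
    (hΘ : Differentiable ℝ Θ)
    (hFode : ∀ t, deriv (deriv F) t =
      -400 * F t / Real.sqrt (R t ^ 2 + 4 * F t ^ 2) ^ 3)
    (hRode : ∀ t, deriv (deriv R) t =
      100 * a ^ 2 / R t ^ 3 - 25 / R t ^ 2
        - 200 * R t / Real.sqrt (R t ^ 2 + 4 * F t ^ 2) ^ 3)
    (hΘode : ∀ t, deriv Θ t = 10 * a / R t ^ 2)
    (x y z : ℝ → EuclideanSpace ℝ (Fin 3))
    (hx : ∀ t, x t = ![0, 0, F t])
    (hy : ∀ t, y t = ![R t * Real.cos (Θ t), R t * Real.sin (Θ t), -F t])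
    (hz : ∀ t, z t = ![-(R t * Real.cos (Θ t)), -(R t * Real.sin (Θ t)), -F t]) :
    ∀ t : ℝ,
      deriv (deriv x) t =
          (100 / ‖y t - x t‖ ^ 3) • (y t - x t)
            + (100 / ‖z t - x t‖ ^ 3) • (z t - x t) ∧
      deriv (deriv y) t =
          (200 / ‖x t - y t‖ ^ 3) • (x t - y t)
            + (100 / ‖z t - y t‖ ^ 3) • (z t - y t) ∧
      deriv (deriv z) t =
          (200 / ‖x t - z t‖ ^ 3) • (x t - z t)
            + (100 / ‖y t - z t‖ ^ 3) • (y t - z t) :=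
  three_body_solution_general a F R Θ hF hR hRpos hΘ hFode hRode hΘode x y z hx hy hz
end

section
/- If T ∈ ℝ satisfies F'(T) = 0 and R'(T) = 0, then for all t ∈ ℝ one has F(T + t) = F(T − t) and R(T + t) = R(T − t); that is, both F and R are even about t = T. -/
/-!
Writing `x = (F, R)`, the system is the autonomous second-order equation `x'' = φ(x)` with `φ`
smooth on the half-plane `R > 0`. Such an equation is reversible: if `x` is a solution, so is
`t ↦ x (2T - t)`, and at a turning point `x'(T) = 0` the two solutions have the same position and
velocity at time `T`. Uniqueness for the first-order system in phase space (the vector field is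
`C¹`, hence locally Lipschitz, along the trajectory) makes them equal.
-/

open Topology

section ODE

variable {E : Type*} [NormedAddCommGroup E] [NormedSpace ℝ E]

theorem ODE_solution_unique_univ_of_contDiffAt {v : E → E} {f g : ℝ → E} {t₀ : ℝ}
    (hv : ∀ t, ContDiffAt ℝ 1 v (f t))
    (hf : ∀ t, HasDerivAt f (v (f t)) t) (hg : ∀ t, HasDerivAt g (v (g t)) t)
    (heq : f t₀ = g t₀) : f = g := by
  suffices IsClopen {t | f t = g t} from
    funext fun t => (this.eq_univ ⟨t₀, heq⟩ ▸ Set.mem_univ t :)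
  refine ⟨isClosed_eq (continuous_iff_continuousAt.2 fun t => (hf t).continuousAt)
    (continuous_iff_continuousAt.2 fun t => (hg t).continuousAt), ?_⟩
  refine isOpen_iff_mem_nhds.2 fun t₁ (ht₁ : f t₁ = g t₁) => ?_
  obtain ⟨K, s, hs, hv_lip⟩ := (hv t₁).exists_lipschitzOnWith
  have hfs : ∀ᶠ t in 𝓝 t₁, f t ∈ s := (hf t₁).continuousAt.preimage_mem_nhds hs
  have hgs : ∀ᶠ t in 𝓝 t₁, g t ∈ s := (hg t₁).continuousAt.preimage_mem_nhds (ht₁ ▸ hs)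
  exact ODE_solution_unique_of_eventually (v := fun _ => v) (.of_forall fun _ => hv_lip)
    (hfs.mono fun t ht => ⟨hf t, ht⟩) (hgs.mono fun t ht => ⟨hg t, ht⟩) ht₁

theorem ODE_secondOrder_solution_symmetric_of_velocity_eq_zero
    {φ : E → E} {x x' : ℝ → E} {T : ℝ}
    (hφ : ∀ t, ContDiffAt ℝ 1 φ (x t))
    (hx : ∀ t, HasDerivAt x (x' t) t) (hx' : ∀ t, HasDerivAt x' (φ (x t)) t)
    (hT : x' T = 0) (t : ℝ) : x (T + t) = x (T - t) := by
  let V : E × E → E × E := fun p => (p.2, φ p.1)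
  have hV : ∀ t, ContDiffAt ℝ 1 V (x (T + t), x' (T + t)) := fun t =>
    contDiffAt_snd.prodMk ((hφ (T + t)).comp (x (T + t), x' (T + t)) contDiffAt_fst)
  have hforward : ∀ t, HasDerivAt (fun t => (x (T + t), x' (T + t)))
      (V (x (T + t), x' (T + t))) t := fun t =>
    ((hx _).comp_const_add T t).prodMk ((hx' _).comp_const_add T t)
  have hbackward : ∀ t, HasDerivAt (fun t => (x (T - t), -x' (T - t)))
      (V (x (T - t), -x' (T - t))) t := by
    intro t
    simpa [V] using ((hx _).comp_const_sub T t).prodMk ((hx' _).comp_const_sub T t).neg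
  have := ODE_solution_unique_univ_of_contDiffAt (t₀ := 0) hV hforward hbackward (by simp [hT])
  exact congrArg Prod.fst (congrFun this t)

end ODE

noncomputable def acceleration (a : ℝ) (p : ℝ × ℝ) : ℝ × ℝ :=
  (-400 * p.1 / √(p.2 ^ 2 + 4 * p.1 ^ 2) ^ 3,
    100 * a ^ 2 / p.2 ^ 3 - 25 / p.2 ^ 2 - 200 * p.2 / √(p.2 ^ 2 + 4 * p.1 ^ 2) ^ 3)

theorem contDiffAt_acceleration (a : ℝ) {p : ℝ × ℝ} (hp : 0 < p.2) :
    ContDiffAt ℝ 1 (acceleration a) p := by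
  unfold acceleration
  fun_prop (disch := positivity)

theorem even_symmetry_about_T_general
    (a : ℝ) (F R : ℝ → ℝ)
    (hF : ContDiff ℝ 2 F) (hR : ContDiff ℝ 2 R)
    (hRpos : ∀ t, 0 < R t)
    (hFode : ∀ t, deriv (deriv F) t =
      -400 * F t / Real.sqrt (R t ^ 2 + 4 * F t ^ 2) ^ 3)
    (hRode : ∀ t, deriv (deriv R) t =
      100 * a ^ 2 / R t ^ 3 - 25 / R t ^ 2
        - 200 * R t / Real.sqrt (R t ^ 2 + 4 * F t ^ 2) ^ 3)
    (T : ℝ) (hFT : deriv F T = 0) (hRT : deriv R T = 0) :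
    ∀ t : ℝ, F (T + t) = F (T - t) ∧ R (T + t) = R (T - t) := by
  have hpos : ∀ t, HasDerivAt (fun t => (F t, R t)) (deriv F t, deriv R t) t := fun t =>
    ((hF.differentiable two_ne_zero t).hasDerivAt).prodMk
      ((hR.differentiable two_ne_zero t).hasDerivAt)
  have hvel : ∀ t, HasDerivAt (fun t => (deriv F t, deriv R t))
      (acceleration a (F t, R t)) t := by
    intro t
    have hF' := (hF.differentiable_deriv_two t).hasDerivAt
    have hR' := (hR.differentiable_deriv_two t).hasDerivAt
    rw [hFode] at hF'
    rw [hRode] at hR'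
    exact hF'.prodMk hR'
  intro t
  exact Prod.ext_iff.mp <| ODE_secondOrder_solution_symmetric_of_velocity_eq_zero
    (fun t => contDiffAt_acceleration a (hRpos t)) hpos hvel (Prod.ext hFT hRT) t

/-- if `F' T = 0` and `R' T = 0`, then `F` and `R` are even about `t = T`. -/
theorem even_symmetry_about_T
    (a b : ℝ) (F R : ℝ → ℝ)
    (hF : ContDiff ℝ 2 F) (hR : ContDiff ℝ 2 R)
    (hRpos : ∀ t, 0 < R t)
    (hFode : ∀ t, deriv (deriv F) t =
      -400 * F t / Real.sqrt (R t ^ 2 + 4 * F t ^ 2) ^ 3)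
    (hRode : ∀ t, deriv (deriv R) t =
      100 * a ^ 2 / R t ^ 3 - 25 / R t ^ 2
        - 200 * R t / Real.sqrt (R t ^ 2 + 4 * F t ^ 2) ^ 3)
    (T : ℝ) (hFT : deriv F T = 0) (hRT : deriv R T = 0) :
    ∀ t : ℝ, F (T + t) = F (T - t) ∧ R (T + t) = R (T - t) :=
  even_symmetry_about_T_general a F R hF hR hRpos hFode hRode T hFT hRT
end

section
/- If T ∈ ℝ satisfies F(T) = 0 and R'(T) = 0, then for all t ∈ ℝ one has F(T + t) = −F(T − t) and R(T + t) = R(T − t); that is, F is odd about t = T and R is even about t = T. -/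
/-!
In the phase variables `(F, F', R, R')` the equations form an autonomous system whose vector
field is `C¹`, hence locally Lipschitz, on the half-space `R > 0`. The system is reversible: the
involution `ρ (F, F', R, R') = (-F, F', R, -R')` anticommutes with the vector field, so
`t ↦ ρ (γ (2T - t))` is again a solution whenever `γ` is. The hypotheses `F T = 0`,
`R' T = 0` say that `γ T` is fixed by `ρ`, so the two solutions agree at `T`, and uniqueness
for locally Lipschitz fields makes them equal everywhere.
-/

open Set

theorem ODE_solution_unique_univ_of_locallyLipschitzOn {E : Type*} [NormedAddCommGroup E]
    [NormedSpace ℝ E] {v : E → E} {U : Set E} (hv : LocallyLipschitzOn U v) {f g : ℝ → E}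
    (hf : ∀ t, HasDerivAt f (v (f t)) t ∧ f t ∈ U)
    (hg : ∀ t, HasDerivAt g (v (g t)) t ∧ g t ∈ U) {t₀ : ℝ} (heq : f t₀ = g t₀) :
    f = g := by
  ext t
  obtain ⟨A, B, ht, ht₀⟩ : ∃ A B, t ∈ Ioo A B ∧ t₀ ∈ Ioo A B :=
    ⟨min t t₀ - 1, max t t₀ + 1, by constructor <;> constructor <;> grind⟩
  -- On `[A, B]` both trajectories stay in a compact subset of `U`, where `v` is Lipschitz.
  set K := f '' Icc A B ∪ g '' Icc A B
  have hK : IsCompact K :=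
    (isCompact_Icc.image_of_continuousOn fun s _ ↦ (hf s).1.continuousAt.continuousWithinAt).union
      (isCompact_Icc.image_of_continuousOn fun s _ ↦ (hg s).1.continuousAt.continuousWithinAt)
  have hKU : K ⊆ U := union_subset (image_subset_iff.2 fun s _ ↦ (hf s).2)
    (image_subset_iff.2 fun s _ ↦ (hg s).2)
  obtain ⟨L, hL⟩ := (hv.mono hKU).exists_lipschitzOnWith_of_compact hK
  exact ODE_solution_unique_of_mem_Ioo (v := fun _ ↦ v) (s := fun _ ↦ K) (fun _ _ ↦ hL) ht₀
    (fun s hs ↦ ⟨(hf s).1, .inl ⟨s, Ioo_subset_Icc_self hs, rfl⟩⟩)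
    (fun s hs ↦ ⟨(hg s).1, .inr ⟨s, Ioo_subset_Icc_self hs, rfl⟩⟩) heq ht

theorem hasDerivAt_reflect_of_reversible {E : Type*} [NormedAddCommGroup E]
    [NormedSpace ℝ E] {v : E → E} (ρ : E →L[ℝ] E) (hρ : ∀ x, v (ρ x) = -ρ (v x))
    {f : ℝ → E} (hf : ∀ t, HasDerivAt f (v (f t)) t) (T t : ℝ) :
    HasDerivAt (fun s ↦ ρ (f (2 * T - s))) (v (ρ (f (2 * T - t)))) t := by
  have h := ρ.hasFDerivAt.comp_hasDerivAt t
    ((hf (2 * T - t)).scomp t ((hasDerivAt_id t).const_sub (2 * T)))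
  simpa [hρ, Function.comp_def] using h

noncomputable def phaseField (a : ℝ) (x : ℝ × ℝ × ℝ × ℝ) : ℝ × ℝ × ℝ × ℝ :=
  (x.2.1, -400 * x.1 / Real.sqrt (x.2.2.1 ^ 2 + 4 * x.1 ^ 2) ^ 3, x.2.2.2,
   100 * a ^ 2 / x.2.2.1 ^ 3 - 25 / x.2.2.1 ^ 2
     - 200 * x.2.2.1 / Real.sqrt (x.2.2.1 ^ 2 + 4 * x.1 ^ 2) ^ 3)

theorem contDiffAt_phaseField (a : ℝ) {x : ℝ × ℝ × ℝ × ℝ} (hx : 0 < x.2.2.1) :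
    ContDiffAt ℝ 1 (phaseField a) x := by
  have h2 : x.2.2.1 ^ 2 ≠ 0 := by positivity
  have h3 : x.2.2.1 ^ 3 ≠ 0 := by positivity
  have hq : x.2.2.1 ^ 2 + 4 * x.1 ^ 2 ≠ 0 := by positivity
  have hs : Real.sqrt (x.2.2.1 ^ 2 + 4 * x.1 ^ 2) ^ 3 ≠ 0 := by positivity
  unfold phaseField
  fun_prop (disch := assumption)

theorem locallyLipschitzOn_phaseField (a : ℝ) :
    LocallyLipschitzOn {x : ℝ × ℝ × ℝ × ℝ | 0 < x.2.2.1} (phaseField a) := by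
  intro x hx
  obtain ⟨K, t, ht, hK⟩ := (contDiffAt_phaseField a hx).exists_lipschitzOnWith
  exact ⟨K, t, mem_nhdsWithin_of_mem_nhds ht, hK⟩

noncomputable def phaseReversal : (ℝ × ℝ × ℝ × ℝ) →L[ℝ] ℝ × ℝ × ℝ × ℝ :=
  let id := ContinuousLinearMap.id ℝ ℝ
  (-id).prodMap (id.prodMap (id.prodMap (-id)))

@[simp]
theorem phaseReversal_apply (x : ℝ × ℝ × ℝ × ℝ) :
    phaseReversal x = (-x.1, x.2.1, x.2.2.1, -x.2.2.2) := rfl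

theorem phaseField_phaseReversal (a : ℝ) (x : ℝ × ℝ × ℝ × ℝ) :
    phaseField a (phaseReversal x) = -phaseReversal (phaseField a x) := by
  simp only [phaseField, phaseReversal_apply, neg_sq, Prod.neg_mk, neg_neg]
  congr 2
  ring

theorem hasDerivAt_phaseCurve {a : ℝ} {F R : ℝ → ℝ}
    (hF : ContDiff ℝ 2 F) (hR : ContDiff ℝ 2 R)
    (hFode : ∀ t, deriv (deriv F) t =
      -400 * F t / Real.sqrt (R t ^ 2 + 4 * F t ^ 2) ^ 3)
    (hRode : ∀ t, deriv (deriv R) t =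
      100 * a ^ 2 / R t ^ 3 - 25 / R t ^ 2
        - 200 * R t / Real.sqrt (R t ^ 2 + 4 * F t ^ 2) ^ 3) (t : ℝ) :
    HasDerivAt (fun s ↦ (F s, deriv F s, R s, deriv R s))
      (phaseField a (F t, deriv F t, R t, deriv R t)) t := by
  have hF' := (hF.differentiable two_ne_zero t).hasDerivAt
  have hF'' := (hF.differentiable_deriv_two t).hasDerivAt
  have hR' := (hR.differentiable two_ne_zero t).hasDerivAt
  have hR'' := (hR.differentiable_deriv_two t).hasDerivAt
  rw [hFode] at hF''
  rw [hRode] at hR''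
  exact hF'.prodMk (hF''.prodMk (hR'.prodMk hR''))

theorem odd_even_symmetry_about_T_general
    (a : ℝ) (F R : ℝ → ℝ)
    (hF : ContDiff ℝ 2 F) (hR : ContDiff ℝ 2 R)
    (hRpos : ∀ t, 0 < R t)
    (hFode : ∀ t, deriv (deriv F) t =
      -400 * F t / Real.sqrt (R t ^ 2 + 4 * F t ^ 2) ^ 3)
    (hRode : ∀ t, deriv (deriv R) t =
      100 * a ^ 2 / R t ^ 3 - 25 / R t ^ 2
        - 200 * R t / Real.sqrt (R t ^ 2 + 4 * F t ^ 2) ^ 3)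
    (T : ℝ) (hFT : F T = 0) (hRT : deriv R T = 0) :
    ∀ t : ℝ, F (T + t) = -F (T - t) ∧ R (T + t) = R (T - t) := by
  set γ : ℝ → ℝ × ℝ × ℝ × ℝ := fun s ↦ (F s, deriv F s, R s, deriv R s)
  have hγ : ∀ t, HasDerivAt γ (phaseField a (γ t)) t := hasDerivAt_phaseCurve hF hR hFode hRode
  have hγT : γ T = phaseReversal (γ (2 * T - T)) := by simp [γ, hFT, hRT, two_mul]
  have hγ_eq : γ = fun s ↦ phaseReversal (γ (2 * T - s)) :=
    ODE_solution_unique_univ_of_locallyLipschitzOn (locallyLipschitzOn_phaseField a)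
      (fun t ↦ ⟨hγ t, hRpos t⟩)
      (fun t ↦ ⟨hasDerivAt_reflect_of_reversible _ (phaseField_phaseReversal a) hγ T t,
        by simpa [γ] using hRpos _⟩) hγT
  intro t
  have h := congrFun hγ_eq (T + t)
  simp only [γ, phaseReversal_apply, Prod.mk.injEq, show 2 * T - (T + t) = T - t by ring] at h
  exact ⟨h.1, h.2.2.1⟩

/-- if `F T = 0` and `R' T = 0`, then `F` is odd about `t = T`
and `R` is even about `t = T`. -/
theorem odd_even_symmetry_about_T
    (a b : ℝ) (F R : ℝ → ℝ)
    (hF : ContDiff ℝ 2 F) (hR : ContDiff ℝ 2 R)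
    (hRpos : ∀ t, 0 < R t)
    (hFode : ∀ t, deriv (deriv F) t =
      -400 * F t / Real.sqrt (R t ^ 2 + 4 * F t ^ 2) ^ 3)
    (hRode : ∀ t, deriv (deriv R) t =
      100 * a ^ 2 / R t ^ 3 - 25 / R t ^ 2
        - 200 * R t / Real.sqrt (R t ^ 2 + 4 * F t ^ 2) ^ 3)
    (T : ℝ) (hFT : F T = 0) (hRT : deriv R T = 0) :
    ∀ t : ℝ, F (T + t) = -F (T - t) ∧ R (T + t) = R (T - t) :=
  odd_even_symmetry_about_T_general a F R hF hR hRpos hFode hRode T hFT hRT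
end

section
/- Assume F(0) = 0 and R'(0) = 0. If T ∈ ℝ satisfies F'(T) = 0 and R'(T) = 0, then F and R are periodic with period 4T: for all t ∈ ℝ, F(t + 4T) = F(t) and R(t + 4T) = R(t). -/
open Set Topology

/-!
Writing `x = (F, R)`, the system is the autonomous second-order equation `x'' = g x` with `g`
smooth on `{R > 0}`, so a solution is determined by `(x, x')` at a single time. The equation is
invariant under time reversal, and `g` commutes with the reflection `σ (F, R) = (-F, R)`. Hence
`t ↦ σ (x (-t))` and `t ↦ x (2T - t)` are again solutions; they have the same data as `x` at `0`
and at `T` respectively, so `x (-t) = σ (x t)` and `x (2T - t) = x t`. Composing the two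
reflections gives the translation by `4T`.
-/

section SecondOrder

variable {E : Type*} [NormedAddCommGroup E] [NormedSpace ℝ E]

theorem ODE_solution_unique_of_contDiffAt {v : E → E} {γ γ' : ℝ → E}
    (hv : ∀ t, ContDiffAt ℝ 1 v (γ t))
    (hγ : ∀ t, HasDerivAt γ (v (γ t)) t) (hγ' : ∀ t, HasDerivAt γ' (v (γ' t)) t)
    {t₀ : ℝ} (h : γ t₀ = γ' t₀) : γ = γ' := by
  have hclopen : IsClopen {t | γ t = γ' t} := by
    refine ⟨isClosed_eq (continuous_iff_continuousAt.2 fun t ↦ (hγ t).continuousAt)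
      (continuous_iff_continuousAt.2 fun t ↦ (hγ' t).continuousAt), ?_⟩
    refine isOpen_iff_mem_nhds.2 fun t₁ (ht₁ : γ t₁ = γ' t₁) ↦ ?_
    obtain ⟨K, s, hs, hlip⟩ := (hv t₁).exists_lipschitzOnWith
    have hs' : s ∈ 𝓝 (γ' t₁) := ht₁ ▸ hs
    exact ODE_solution_unique_of_eventually (v := fun _ ↦ v) (s := fun _ ↦ s)
      (.of_forall fun _ ↦ hlip)
      (((hγ t₁).continuousAt.eventually_mem hs).mono fun t ht ↦ ⟨hγ t, ht⟩)
      (((hγ' t₁).continuousAt.eventually_mem hs').mono fun t ht ↦ ⟨hγ' t, ht⟩) ht₁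
  funext t
  exact eq_univ_iff_forall.1 (hclopen.eq_univ ⟨t₀, h⟩) t

variable {g : E → E} {x x' y y' : ℝ → E}

theorem secondOrderODE_solution_unique (hg : ∀ t, ContDiffAt ℝ 1 g (x t))
    (hx : ∀ t, HasDerivAt x (x' t) t) (hx' : ∀ t, HasDerivAt x' (g (x t)) t)
    (hy : ∀ t, HasDerivAt y (y' t) t) (hy' : ∀ t, HasDerivAt y' (g (y t)) t)
    {t₀ : ℝ} (h : x t₀ = y t₀) (h' : x' t₀ = y' t₀) : x = y := by
  have hphase := ODE_solution_unique_of_contDiffAt (v := fun p : E × E ↦ (p.2, g p.1))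
    (γ := fun t ↦ (x t, x' t)) (γ' := fun t ↦ (y t, y' t))
    (fun t ↦ contDiffAt_snd.prodMk ((hg t).comp (x t, x' t) contDiffAt_fst))
    (fun t ↦ (hx t).prodMk (hx' t)) (fun t ↦ (hy t).prodMk (hy' t)) (Prod.ext h h')
  funext t
  exact congrArg Prod.fst (congrFun hphase t)

theorem hasDerivAt_map_comp_const_sub (L : E →L[ℝ] E) (c : ℝ)
    (hx : ∀ t, HasDerivAt x (x' t) t) (t : ℝ) :
    HasDerivAt (fun t ↦ L (x (c - t))) (-L (x' (c - t))) t := by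
  simpa [Function.comp_def] using
    L.hasFDerivAt.comp_hasDerivAt t ((hx (c - t)).comp_const_sub c t)

theorem apply_two_mul_sub_eq_of_map_comm (L : E →L[ℝ] E) (hL : ∀ p, g (L p) = L (g p))
    (hg : ∀ t, ContDiffAt ℝ 1 g (x t))
    (hx : ∀ t, HasDerivAt x (x' t) t) (hx' : ∀ t, HasDerivAt x' (g (x t)) t)
    {t₀ : ℝ} (hx₀ : L (x t₀) = x t₀) (hx₀' : L (x' t₀) = -x' t₀) (t : ℝ) :
    x (2 * t₀ - t) = L (x t) := by
  have hrev := secondOrderODE_solution_unique hg hx hx'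
    (hasDerivAt_map_comp_const_sub L (2 * t₀) hx)
    (fun t ↦ by simpa [hL] using hasDerivAt_map_comp_const_sub (-L) (2 * t₀) hx' t)
    (t₀ := t₀) (by rw [two_mul, add_sub_cancel_right, hx₀])
    (by rw [two_mul, add_sub_cancel_right, hx₀', neg_neg])
  calc x (2 * t₀ - t) = L (x (2 * t₀ - (2 * t₀ - t))) := congrFun hrev _
    _ = L (x t) := by rw [sub_sub_cancel]

end SecondOrder

theorem Function.periodic_two_mul_of_apply_neg_of_apply_sub {α : Type*} {x : ℝ → α} {σ : α → α}
    (hσ : Function.Involutive σ) (h₀ : ∀ t, x (-t) = σ (x t)) {c : ℝ}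
    (hc : ∀ t, x (c - t) = x t) : Function.Periodic x (2 * c) := fun t ↦ by
  calc x (t + 2 * c) = x (c - (t + 2 * c)) := (hc _).symm
    _ = σ (x (t + c)) := by rw [← h₀]; ring_nf
    _ = σ (x (-t)) := by rw [← hc (t + c)]; ring_nf
    _ = x t := by rw [h₀, hσ]

noncomputable def accel (a : ℝ) (p : ℝ × ℝ) : ℝ × ℝ :=
  (-400 * p.1 / √(p.2 ^ 2 + 4 * p.1 ^ 2) ^ 3,
    100 * a ^ 2 / p.2 ^ 3 - 25 / p.2 ^ 2 - 200 * p.2 / √(p.2 ^ 2 + 4 * p.1 ^ 2) ^ 3)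

theorem accel_contDiffAt (a : ℝ) {p : ℝ × ℝ} (hp : 0 < p.2) : ContDiffAt ℝ 1 (accel a) p := by
  have : 0 < p.2 ^ 2 + 4 * p.1 ^ 2 := by positivity
  unfold accel
  fun_prop (disch := positivity)

def negFst : ℝ × ℝ →L[ℝ] ℝ × ℝ := (-ContinuousLinearMap.fst ℝ ℝ ℝ).prod (.snd ℝ ℝ ℝ)

@[simp]
theorem negFst_apply (p : ℝ × ℝ) : negFst p = (-p.1, p.2) := rfl

theorem negFst_involutive : Function.Involutive negFst := fun p ↦ by simp

theorem accel_negFst (a : ℝ) (p : ℝ × ℝ) : accel a (negFst p) = negFst (accel a p) := by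
  simp only [accel, negFst_apply, neg_sq, Prod.mk.injEq, and_true]
  ring

theorem odd_even_periodic_general
    (a : ℝ) (F R : ℝ → ℝ)
    (hF : ContDiff ℝ 2 F) (hR : ContDiff ℝ 2 R)
    (hRpos : ∀ t, 0 < R t)
    (hFode : ∀ t, deriv (deriv F) t =
      -400 * F t / Real.sqrt (R t ^ 2 + 4 * F t ^ 2) ^ 3)
    (hRode : ∀ t, deriv (deriv R) t =
      100 * a ^ 2 / R t ^ 3 - 25 / R t ^ 2
        - 200 * R t / Real.sqrt (R t ^ 2 + 4 * F t ^ 2) ^ 3)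
    (hF0 : F 0 = 0) (hR0 : deriv R 0 = 0)
    (T : ℝ) (hFT : deriv F T = 0) (hRT : deriv R T = 0) :
    ∀ t : ℝ, F (t + 4 * T) = F t ∧ R (t + 4 * T) = R t := by
  set x : ℝ → ℝ × ℝ := fun t ↦ (F t, R t)
  set x' : ℝ → ℝ × ℝ := fun t ↦ (deriv F t, deriv R t)
  have hg t : ContDiffAt ℝ 1 (accel a) (x t) := accel_contDiffAt a (hRpos t)
  have hx t : HasDerivAt x (x' t) t :=
    (hF.differentiable two_ne_zero t).hasDerivAt.prodMk
      (hR.differentiable two_ne_zero t).hasDerivAt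
  have hx' t : HasDerivAt x' (accel a (x t)) t := by
    rw [show accel a (x t) = (deriv (deriv F) t, deriv (deriv R) t) by rw [hFode, hRode]; rfl]
    exact (hF.differentiable_deriv_two t).hasDerivAt.prodMk
      (hR.differentiable_deriv_two t).hasDerivAt
  have hodd t : x (-t) = negFst (x t) := by
    simpa using apply_two_mul_sub_eq_of_map_comm negFst (accel_negFst a) hg hx hx' (t₀ := 0)
      (by simp [x, hF0]) (by simp [x', hR0]) t
  have hT t : x (2 * T - t) = x t :=
    apply_two_mul_sub_eq_of_map_comm (g := accel a) (.id ℝ _) (fun _ ↦ rfl) hg hx hx' rfl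
      (by simp [x', hFT, hRT]) t
  intro t
  rw [show 4 * T = 2 * (2 * T) by ring]
  exact Prod.ext_iff.1
    (Function.periodic_two_mul_of_apply_neg_of_apply_sub negFst_involutive hodd hT t)

/-- odd/even solutions are periodic with period `4 T`. -/
theorem odd_even_periodic
    (a b : ℝ) (F R : ℝ → ℝ)
    (hF : ContDiff ℝ 2 F) (hR : ContDiff ℝ 2 R)
    (hRpos : ∀ t, 0 < R t)
    (hFode : ∀ t, deriv (deriv F) t =
      -400 * F t / Real.sqrt (R t ^ 2 + 4 * F t ^ 2) ^ 3)
    (hRode : ∀ t, deriv (deriv R) t =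
      100 * a ^ 2 / R t ^ 3 - 25 / R t ^ 2
        - 200 * R t / Real.sqrt (R t ^ 2 + 4 * F t ^ 2) ^ 3)
    (hF0 : F 0 = 0) (hR0 : deriv R 0 = 0)
    (T : ℝ) (hFT : deriv F T = 0) (hRT : deriv R T = 0) :
    ∀ t : ℝ, F (t + 4 * T) = F t ∧ R (t + 4 * T) = R t :=
  odd_even_periodic_general a F R hF hR hRpos hFode hRode hF0 hR0 T hFT hRT
end

section
/- Assume F(0) = 0 and R'(0) = 0. If T ∈ ℝ satisfies F(T) = 0 and R'(T) = 0, then F and R are periodic with period 2T: for all t ∈ ℝ, F(t + 2T) = F(t) and R(t + 2T) = R(t). -/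
/-!
The equations are invariant under time reversal combined with `F ↦ -F`: in the phase space of
`(F, F', R, R')` the vector field anticommutes with the reflection `σ (F, F', R, R') =
(-F, F', R, -R')`. So `t ↦ σ (x (2c - t))` solves the system whenever the state curve `x` does,
and if `x c` is fixed by `σ` (that is, `F c = 0` and `R' c = 0`) uniqueness of solutions forces
`x (2c - t) = σ (x t)`. Composing the reflections about `0` and `T` gives the translation by `2T`.
-/

open Set Filter Topology

section ReversibleODE

variable {E : Type*} [NormedAddCommGroup E] [NormedSpace ℝ E]

theorem ODE_solution_unique_of_locallyLipschitzOn {v : E → E} {U : Set E} (hU : IsOpen U)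
    (hv : LocallyLipschitzOn U v) {x y : ℝ → E} (hx : ∀ t, HasDerivAt x (v (x t)) t)
    (hxU : ∀ t, x t ∈ U) (hy : ∀ t, HasDerivAt y (v (y t)) t) {t₀ : ℝ} (h : x t₀ = y t₀) :
    x = y := by
  have hclosed : IsClosed {t | x t = y t} :=
    isClosed_eq (continuous_iff_continuousAt.2 fun t => (hx t).continuousAt)
      (continuous_iff_continuousAt.2 fun t => (hy t).continuousAt)
  have hopen : IsOpen {t | x t = y t} := by
    refine isOpen_iff_mem_nhds.2 fun t₁ (ht₁ : x t₁ = y t₁) => ?_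
    obtain ⟨K, s, hs, hLip⟩ := hv (hxU t₁)
    rw [hU.nhdsWithin_eq (hxU t₁)] at hs
    have hxs : ∀ᶠ t in 𝓝 t₁, HasDerivAt x (v (x t)) t ∧ x t ∈ s :=
      ((hx t₁).continuousAt.eventually_mem hs).mono fun t ht => ⟨hx t, ht⟩
    have hys : ∀ᶠ t in 𝓝 t₁, HasDerivAt y (v (y t)) t ∧ y t ∈ s :=
      ((hy t₁).continuousAt.eventually_mem (ht₁ ▸ hs)).mono fun t ht => ⟨hy t, ht⟩
    exact ODE_solution_unique_of_eventually (v := fun _ => v) (s := fun _ => s)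
      (.of_forall fun _ => hLip) hxs hys ht₁
  funext t
  have : {t | x t = y t} = univ := IsClopen.eq_univ ⟨hclosed, hopen⟩ ⟨t₀, h⟩
  exact eq_univ_iff_forall.1 this t

variable {v : E → E} (σ : E →L[ℝ] E) (hσ : ∀ p, v (σ p) = -σ (v p))
  {x : ℝ → E} (hx : ∀ t, HasDerivAt x (v (x t)) t)
include hσ hx

theorem hasDerivAt_reflect_solution (s t : ℝ) :
    HasDerivAt (fun t => σ (x (s - t))) (v (σ (x (s - t)))) t := by
  refine (σ.hasFDerivAt.comp_hasDerivAt t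
    ((hx (s - t)).scomp t ((hasDerivAt_id t).const_sub s))).congr_deriv ?_
  rw [hσ, neg_one_smul, map_neg]

variable {U : Set E} (hU : IsOpen U) (hv : LocallyLipschitzOn U v) (hxU : ∀ t, x t ∈ U)
include hU hv hxU

theorem eq_reflect_of_reversible {c : ℝ} (hc : σ (x c) = x c) (t : ℝ) :
    x (2 * c - t) = σ (x t) := by
  have hxy := ODE_solution_unique_of_locallyLipschitzOn hU hv hx hxU
    (hasDerivAt_reflect_solution σ hσ hx (2 * c)) (t₀ := c) (by simp [two_mul, hc])
  simpa using congrFun hxy (2 * c - t)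

theorem periodic_of_reversible (hσσ : Function.Involutive σ) {c₁ c₂ : ℝ}
    (h₁ : σ (x c₁) = x c₁) (h₂ : σ (x c₂) = x c₂) :
    Function.Periodic x (2 * (c₂ - c₁)) := fun t => by
  calc x (t + 2 * (c₂ - c₁)) = x (2 * c₂ - (2 * c₁ - t)) := by congr 1; ring
    _ = σ (σ (x t)) := by
      rw [eq_reflect_of_reversible σ hσ hx hU hv hxU h₂,
        eq_reflect_of_reversible σ hσ hx hU hv hxU h₁]
    _ = x t := hσσ _

end ReversibleODE

noncomputable def odeField (a : ℝ) (p : ℝ × ℝ × ℝ × ℝ) : ℝ × ℝ × ℝ × ℝ :=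
  (p.2.1, -400 * p.1 / Real.sqrt (p.2.2.1 ^ 2 + 4 * p.1 ^ 2) ^ 3,
   p.2.2.2,
   100 * a ^ 2 / p.2.2.1 ^ 3 - 25 / p.2.2.1 ^ 2
     - 200 * p.2.2.1 / Real.sqrt (p.2.2.1 ^ 2 + 4 * p.1 ^ 2) ^ 3)

noncomputable def stateReflection : (ℝ × ℝ × ℝ × ℝ) →L[ℝ] ℝ × ℝ × ℝ × ℝ :=
  (-1 : ℝ →L[ℝ] ℝ).prodMap ((1 : ℝ →L[ℝ] ℝ).prodMap ((1 : ℝ →L[ℝ] ℝ).prodMap (-1)))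

@[simp]
theorem stateReflection_apply (p : ℝ × ℝ × ℝ × ℝ) :
    stateReflection p = (-p.1, p.2.1, p.2.2.1, -p.2.2.2) := rfl

theorem stateReflection_involutive : Function.Involutive stateReflection := fun p => by
  simp

theorem odeField_stateReflection (a : ℝ) (p : ℝ × ℝ × ℝ × ℝ) :
    odeField a (stateReflection p) = -stateReflection (odeField a p) := by
  simp only [odeField, stateReflection_apply, neg_sq, Prod.neg_mk, neg_neg]
  ring_nf

theorem odeField_contDiffAt (a : ℝ) {p : ℝ × ℝ × ℝ × ℝ} (hp : p.2.2.1 ≠ 0) :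
    ContDiffAt ℝ 1 (odeField a) p := by
  unfold odeField
  fun_prop (disch := positivity)

theorem locallyLipschitzOn_odeField (a : ℝ) :
    LocallyLipschitzOn {p : ℝ × ℝ × ℝ × ℝ | p.2.2.1 ≠ 0} (odeField a) := fun p hp => by
  obtain ⟨K, s, hs, hLip⟩ := (odeField_contDiffAt a hp).exists_lipschitzOnWith
  exact ⟨K, s, mem_nhdsWithin_of_mem_nhds hs, hLip⟩

theorem hasDerivAt_state {a : ℝ} {F R : ℝ → ℝ} (hF : ContDiff ℝ 2 F) (hR : ContDiff ℝ 2 R)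
    (hFode : ∀ t, deriv (deriv F) t =
      -400 * F t / Real.sqrt (R t ^ 2 + 4 * F t ^ 2) ^ 3)
    (hRode : ∀ t, deriv (deriv R) t =
      100 * a ^ 2 / R t ^ 3 - 25 / R t ^ 2
        - 200 * R t / Real.sqrt (R t ^ 2 + 4 * F t ^ 2) ^ 3) (t : ℝ) :
    HasDerivAt (fun t => (F t, deriv F t, R t, deriv R t))
      (odeField a (F t, deriv F t, R t, deriv R t)) t := by
  have hF2 := (hF.differentiable_deriv_two t).hasDerivAt
  have hR2 := (hR.differentiable_deriv_two t).hasDerivAt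
  rw [hFode] at hF2
  rw [hRode] at hR2
  exact (hF.differentiable two_ne_zero t).hasDerivAt.prodMk
    (hF2.prodMk ((hR.differentiable two_ne_zero t).hasDerivAt.prodMk hR2))

theorem odd_periodic_general
    (a : ℝ) (F R : ℝ → ℝ)
    (hF : ContDiff ℝ 2 F) (hR : ContDiff ℝ 2 R)
    (hRpos : ∀ t, 0 < R t)
    (hFode : ∀ t, deriv (deriv F) t =
      -400 * F t / Real.sqrt (R t ^ 2 + 4 * F t ^ 2) ^ 3)
    (hRode : ∀ t, deriv (deriv R) t =
      100 * a ^ 2 / R t ^ 3 - 25 / R t ^ 2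
        - 200 * R t / Real.sqrt (R t ^ 2 + 4 * F t ^ 2) ^ 3)
    (hF0 : F 0 = 0) (hR0 : deriv R 0 = 0)
    (T : ℝ) (hFT : F T = 0) (hRT : deriv R T = 0) :
    ∀ t : ℝ, F (t + 2 * T) = F t ∧ R (t + 2 * T) = R t := by
  set x : ℝ → ℝ × ℝ × ℝ × ℝ := fun t => (F t, deriv F t, R t, deriv R t)
  have hfixed : ∀ c, F c = 0 → deriv R c = 0 → stateReflection (x c) = x c := fun c hFc hRc => by
    simp [x, hFc, hRc]
  have hper := periodic_of_reversible stateReflection (odeField_stateReflection a)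
    (hasDerivAt_state hF hR hFode hRode) (isOpen_ne_fun (by fun_prop) (by fun_prop))
    (locallyLipschitzOn_odeField a) (fun t => (hRpos t).ne') stateReflection_involutive
    (hfixed 0 hF0 hR0) (hfixed T hFT hRT)
  intro t
  have ht := hper t
  simp only [sub_zero, Prod.mk.injEq] at ht
  exact ⟨ht.1, ht.2.2.1⟩

/-- odd solutions are periodic with period `2 T`. -/
theorem odd_periodic
    (a b : ℝ) (F R : ℝ → ℝ)
    (hF : ContDiff ℝ 2 F) (hR : ContDiff ℝ 2 R)
    (hRpos : ∀ t, 0 < R t)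
    (hFode : ∀ t, deriv (deriv F) t =
      -400 * F t / Real.sqrt (R t ^ 2 + 4 * F t ^ 2) ^ 3)
    (hRode : ∀ t, deriv (deriv R) t =
      100 * a ^ 2 / R t ^ 3 - 25 / R t ^ 2
        - 200 * R t / Real.sqrt (R t ^ 2 + 4 * F t ^ 2) ^ 3)
    (hF0 : F 0 = 0) (hR0 : deriv R 0 = 0)
    (T : ℝ) (hFT : F T = 0) (hRT : deriv R T = 0) :
    ∀ t : ℝ, F (t + 2 * T) = F t ∧ R (t + 2 * T) = R t :=
  odd_periodic_general a F R hF hR hRpos hFode hRode hF0 hR0 T hFT hRT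
end

section
/- Let x(t) = (0, 0, F(t)), y(t) = (R(t)·cos Θ(t), R(t)·sin Θ(t), −F(t)) and z(t) = (−R(t)·cos Θ(t), −R(t)·sin Θ(t), −F(t)) be curves in ℝ³. Suppose F and R are periodic with period P > 0: F(t + P) = F(t) and R(t + P) = R(t) for all t ∈ ℝ. Then for all t ∈ ℝ: x(t + P) = x(t), y(t + P) = ρ(y(t)) and z(t + P) = ρ(z(t)), where ρ : ℝ³ → ℝ³ is the rotation about the z-axis by the angle Θ(P), i.e. ρ(u, v, w) = (u·cos Θ(P) − v·sin Θ(P), u·sin Θ(P) + v·cos Θ(P), w). In particular the solution is reduced periodic with period P: the configuration at time t + P is obtained from the configuration at time t by a fixed rotation. -/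
/-!
Since `R` is `P`-periodic, so is `Θ' = 10 a / R²`; hence `Θ (t + P) - Θ t` has zero derivative
and equals its value `Θ P` at `t = 0`. In cylindrical coordinates `y` and `z` have angle `Θ`
(with radii `R` and `-R`) and `P`-periodic radius and height, so advancing time by `P` adds
`Θ P` to the angle, which is the rotation `ρ`.
-/

open Real

section PeriodicDerivative

variable {𝕜 E : Type*} [RCLike 𝕜] [NormedAddCommGroup E] [NormedSpace 𝕜 E]

theorem Function.Periodic.add_period_eq_of_deriv {f : 𝕜 → E} {P : 𝕜} (hf : Differentiable 𝕜 f)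
    (hper : Function.Periodic (deriv f) P) (t : 𝕜) : f (t + P) = f t + (f P - f 0) := by
  have hfP : Differentiable 𝕜 fun s ↦ f (s + P) := fun s ↦
    differentiableAt_comp_add_const.2 (hf (s + P))
  have hderiv : ∀ s, deriv (fun s ↦ f (s + P) - f s) s = 0 := fun s ↦ by
    rw [deriv_fun_sub (hfP s) (hf s), deriv_comp_add_const, hper s, sub_self]
  have hconst : f (t + P) - f t = f (0 + P) - f 0 :=
    is_const_of_deriv_eq_zero (hfP.sub hf) hderiv t 0
  rw [zero_add] at hconst
  rw [← hconst, add_sub_cancel]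

end PeriodicDerivative

theorem rotation_apply_cylindrical {φ : ℝ} {ρ : EuclideanSpace ℝ (Fin 3) → EuclideanSpace ℝ (Fin 3)}
    (hρ : ∀ p : EuclideanSpace ℝ (Fin 3),
      ρ p = ![p 0 * cos φ - p 1 * sin φ, p 0 * sin φ + p 1 * cos φ, p 2])
    {p : EuclideanSpace ℝ (Fin 3)} {r θ w : ℝ} (hp : p = ![r * cos θ, r * sin θ, w]) :
    ρ p = ![r * cos (θ + φ), r * sin (θ + φ), w] := by
  rw [hρ, hp, cos_add, sin_add]
  simp only [Matrix.cons_val_zero, Matrix.cons_val_one, Matrix.cons_val_two, Matrix.head_cons,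
    Matrix.tail_cons]
  congr 2 <;> ring

theorem reduced_periodic_general
    (a : ℝ) (F R Θ : ℝ → ℝ)
    (hΘ : Differentiable ℝ Θ) (hΘ0 : Θ 0 = 0)
    (hΘ' : ∀ t, deriv Θ t = 10 * a / R t ^ 2)
    (P : ℝ)
    (hFper : ∀ t, F (t + P) = F t) (hRper : ∀ t, R (t + P) = R t)
    (x y z : ℝ → EuclideanSpace ℝ (Fin 3))
    (hx : ∀ t, x t = ![0, 0, F t])
    (hy : ∀ t, y t = ![R t * Real.cos (Θ t), R t * Real.sin (Θ t), -F t])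
    (hz : ∀ t, z t = ![-(R t * Real.cos (Θ t)), -(R t * Real.sin (Θ t)), -F t])
    (ρ : EuclideanSpace ℝ (Fin 3) → EuclideanSpace ℝ (Fin 3))
    (hρ : ∀ p : EuclideanSpace ℝ (Fin 3),
      ρ p = ![p 0 * Real.cos (Θ P) - p 1 * Real.sin (Θ P),
              p 0 * Real.sin (Θ P) + p 1 * Real.cos (Θ P), p 2]) :
    ∀ t : ℝ, x (t + P) = x t ∧ y (t + P) = ρ (y t) ∧ z (t + P) = ρ (z t) := by
  have hΘ'per : Function.Periodic (deriv Θ) P := fun s ↦ by rw [hΘ', hΘ', hRper]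
  have hΘper : ∀ t, Θ (t + P) = Θ t + Θ P := fun t ↦ by
    rw [hΘ'per.add_period_eq_of_deriv hΘ t, hΘ0, sub_zero]
  intro t
  refine ⟨?_, ?_, ?_⟩ <;> apply WithLp.ofLp_injective
  · rw [hx, hx, hFper]
  · rw [rotation_apply_cylindrical hρ (hy t), hy, hΘper, hRper, hFper]
  · have hz' : ∀ s, z s = ![-R s * cos (Θ s), -R s * sin (Θ s), -F s] := by
      simpa only [neg_mul] using hz
    rw [rotation_apply_cylindrical hρ (hz' t), hz', hΘper, hRper, hFper]

/-- if `F` and `R` are `P`-periodic, then the solution is reduced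
periodic with period `P`: after time `P` the configuration is obtained from the
initial one by the rotation `ρ` about the `z`-axis by angle `Θ P`. -/
theorem reduced_periodic
    (a : ℝ) (F R Θ : ℝ → ℝ)
    (hRcont : Continuous R) (hRpos : ∀ t, 0 < R t)
    (hΘ : Differentiable ℝ Θ) (hΘ0 : Θ 0 = 0)
    (hΘ' : ∀ t, deriv Θ t = 10 * a / R t ^ 2)
    (P : ℝ) (hP : 0 < P)
    (hFper : ∀ t, F (t + P) = F t) (hRper : ∀ t, R (t + P) = R t)
    (x y z : ℝ → EuclideanSpace ℝ (Fin 3))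
    (hx : ∀ t, x t = ![0, 0, F t])
    (hy : ∀ t, y t = ![R t * Real.cos (Θ t), R t * Real.sin (Θ t), -F t])
    (hz : ∀ t, z t = ![-(R t * Real.cos (Θ t)), -(R t * Real.sin (Θ t)), -F t])
    (ρ : EuclideanSpace ℝ (Fin 3) → EuclideanSpace ℝ (Fin 3))
    (hρ : ∀ p : EuclideanSpace ℝ (Fin 3),
      ρ p = ![p 0 * Real.cos (Θ P) - p 1 * Real.sin (Θ P),
              p 0 * Real.sin (Θ P) + p 1 * Real.cos (Θ P), p 2]) :
    ∀ t : ℝ, x (t + P) = x t ∧ y (t + P) = ρ (y t) ∧ z (t + P) = ρ (z t) :=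
  reduced_periodic_general a F R Θ hΘ hΘ0 hΘ' P hFper hRper x y z hx hy hz ρ hρ
end

section
/- Let x(t) = (0, 0, F(t)), y(t) = (R(t)·cos Θ(t), R(t)·sin Θ(t), −F(t)) and z(t) = (−R(t)·cos Θ(t), −R(t)·sin Θ(t), −F(t)) be curves in ℝ³. Suppose F and R are periodic with period P > 0, and suppose Θ(P)/π is rational, say Θ(P) = (p/q)·π with p an integer and q a positive integer. Then the motion is fully periodic with period 2qP: for all t ∈ ℝ, x(t + 2qP) = x(t), y(t + 2qP) = y(t) and z(t + 2qP) = z(t). -/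
/-!
Since `Θ'` is the `P`-periodic function `10 a / R²`, the increment `Θ (t + P) - Θ t` has zero
derivative, so it equals its value `Θ P` at `t = 0`. Hence after `2 q` periods the angle has
advanced by `2 q Θ P = 2 p π`, while `F` and `R` have returned to their values; all three curves
only depend on `F`, `R` and `Θ` modulo `2π`.
-/

open Function

theorem apply_add_sub_eq_of_periodic_deriv {𝕜 E : Type*} [RCLike 𝕜] [NormedAddCommGroup E]
    [NormedSpace 𝕜 E] {f : 𝕜 → E} {c : 𝕜} (hf : Differentiable 𝕜 f)
    (hf' : Periodic (deriv f) c) (t : 𝕜) :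
    f (t + c) - f t = f c - f 0 := by
  have hdiff : Differentiable 𝕜 (fun s => f (s + c) - f s) :=
    (hf.comp (differentiable_id.add_const c)).sub hf
  have hderiv : ∀ s, deriv (fun s => f (s + c) - f s) s = 0 := fun s => by
    have h : HasDerivAt (fun s => f (s + c) - f s) (deriv f (s + c) - deriv f s) s :=
      ((hf (s + c)).hasDerivAt.comp_add_const s c).sub (hf s).hasDerivAt
    rw [h.deriv, hf' s, sub_self]
  simpa using is_const_of_deriv_eq_zero hdiff hderiv t 0

theorem apply_add_nsmul_of_apply_add {G H : Type*} [AddMonoid G] [AddMonoid H] {f : G → H}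
    {c : G} {d : H} (h : ∀ t, f (t + c) = f t + d) (n : ℕ) (t : G) :
    f (t + n • c) = f t + n • d := by
  induction n with
  | zero => simp
  | succ n ih => rw [succ_nsmul, ← add_assoc, h, ih, succ_nsmul, add_assoc]

theorem fully_periodic_general
    (a : ℝ) (F R Θ : ℝ → ℝ)
    (hΘ : Differentiable ℝ Θ) (hΘ0 : Θ 0 = 0)
    (hΘ' : ∀ t, deriv Θ t = 10 * a / R t ^ 2)
    (P : ℝ)
    (hFper : ∀ t, F (t + P) = F t) (hRper : ∀ t, R (t + P) = R t)
    (p : ℤ) (q : ℕ) (hq : 0 < q)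
    (hrat : Θ P = ((p : ℝ) / (q : ℝ)) * Real.pi)
    (x y z : ℝ → EuclideanSpace ℝ (Fin 3))
    (hx : ∀ t, x t = ![0, 0, F t])
    (hy : ∀ t, y t = ![R t * Real.cos (Θ t), R t * Real.sin (Θ t), -F t])
    (hz : ∀ t, z t = ![-(R t * Real.cos (Θ t)), -(R t * Real.sin (Θ t)), -F t]) :
    ∀ t : ℝ, x (t + 2 * q * P) = x t ∧ y (t + 2 * q * P) = y t ∧
      z (t + 2 * q * P) = z t := by
  intro t
  have hΘ_step : ∀ s, Θ (s + P) = Θ s + Θ P := fun s => sub_eq_iff_eq_add'.mp <| by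
    simpa only [hΘ0, sub_zero] using
      apply_add_sub_eq_of_periodic_deriv (c := P) hΘ (fun s => by simp only [hΘ', hRper]) s
  have hperiod : 2 * q * P = ((2 * q : ℕ) : ℝ) * P := by push_cast; ring
  have hF : F (t + 2 * q * P) = F t := by rw [hperiod]; exact Periodic.nat_mul hFper _ t
  have hR : R (t + 2 * q * P) = R t := by rw [hperiod]; exact Periodic.nat_mul hRper _ t
  have hΘ_turn : Θ (t + 2 * q * P) = Θ t + p * (2 * Real.pi) := by
    rw [hperiod, ← nsmul_eq_mul, apply_add_nsmul_of_apply_add hΘ_step, nsmul_eq_mul, hrat]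
    push_cast
    field_simp
  refine ⟨?_, ?_, ?_⟩ <;> apply WithLp.ofLp_injective 2
  · rw [hx, hx, hF]
  · rw [hy, hy, hF, hR, hΘ_turn, Real.cos_add_int_mul_two_pi, Real.sin_add_int_mul_two_pi]
  · rw [hz, hz, hF, hR, hΘ_turn, Real.cos_add_int_mul_two_pi, Real.sin_add_int_mul_two_pi]

/-- if `F` and `R` are `P`-periodic and `Θ P` is a rational
multiple `(p/q)·π` of `π`, then the motion is fully periodic with period `2 q P`. -/
theorem fully_periodic
    (a : ℝ) (F R Θ : ℝ → ℝ)
    (hRcont : Continuous R) (hRpos : ∀ t, 0 < R t)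
    (hΘ : Differentiable ℝ Θ) (hΘ0 : Θ 0 = 0)
    (hΘ' : ∀ t, deriv Θ t = 10 * a / R t ^ 2)
    (P : ℝ) (hP : 0 < P)
    (hFper : ∀ t, F (t + P) = F t) (hRper : ∀ t, R (t + P) = R t)
    (p : ℤ) (q : ℕ) (hq : 0 < q)
    (hrat : Θ P = ((p : ℝ) / (q : ℝ)) * Real.pi)
    (x y z : ℝ → EuclideanSpace ℝ (Fin 3))
    (hx : ∀ t, x t = ![0, 0, F t])
    (hy : ∀ t, y t = ![R t * Real.cos (Θ t), R t * Real.sin (Θ t), -F t])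
    (hz : ∀ t, z t = ![-(R t * Real.cos (Θ t)), -(R t * Real.sin (Θ t)), -F t]) :
    ∀ t : ℝ, x (t + 2 * q * P) = x t ∧ y (t + 2 * q * P) = y t ∧
      z (t + 2 * q * P) = z t :=
  fully_periodic_general a F R Θ hΘ hΘ0 hΘ' P hFper hRper p q hq hrat x y z hx hy hz
end
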